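/- Let α, β ∈ ℝ and w ∈ ℝ^q satisfy ‖w‖² − 4αβ > 0, and define h_{α,β,w}(Υ) = α·e^{−Υ₁} + ⟨w, Υ₂⟩ + β·e^{Υ₁}·(1 + ‖Υ₂‖²) and the hyperplane H_{α,β,w} = {Υ ∈ G_q : h_{α,β,w}(Υ) = 0}. Then H_{α,β,w} is nonempty, and for every Υ ∈ G_q the infimum of d(Υ, Ψ) over Ψ ∈ H_{α,β,w} equals (1/2)·arccosh(1 + 2·h_{α,β,w}(Υ)²/(‖w‖² − 4αβ)). -/

import Mathlib

/-- The inverse hyperbolic cosine, `arccosh x = log (x + √(x² − 1))`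
(the inverse of `cosh` on `[0, ∞)` for `x ≥ 1`). -/
noncomputable def arccosh (x : ℝ) : ℝ :=
  Real.log (x + Real.sqrt (x ^ 2 - 1))

/-- The solvable group operation on `ℝ × ℝ^q`:
`Ψ * Υ = (Υ₁ + Ψ₁, Υ₂ + e^{−Υ₁}·Ψ₂)`. -/
noncomputable def gmul {q : ℕ} (Ψ Υ : ℝ × EuclideanSpace ℝ (Fin q)) :
    ℝ × EuclideanSpace ℝ (Fin q) :=
  (Υ.1 + Ψ.1, Υ.2 + Real.exp (-Υ.1) • Ψ.2)

/-- The group inverse `Υ⁻¹ = (−Υ₁, −e^{Υ₁}·Υ₂)`. -/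
noncomputable def ginv {q : ℕ} (Υ : ℝ × EuclideanSpace ℝ (Fin q)) :
    ℝ × EuclideanSpace ℝ (Fin q) :=
  (-Υ.1, -(Real.exp Υ.1 • Υ.2))

/-- The norm `N(Υ) = arccosh((e^{−Υ₁} + e^{Υ₁}(1 + ‖Υ₂‖²))/2)`. -/
noncomputable def Nnorm {q : ℕ} (Υ : ℝ × EuclideanSpace ℝ (Fin q)) : ℝ :=
  arccosh ((Real.exp (-Υ.1) + Real.exp Υ.1 * (1 + ‖Υ.2‖ ^ 2)) / 2)

/-- The distance `d(Υ, Ψ) = N(Ψ⁻¹ * Υ)`. -/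
noncomputable def gdist {q : ℕ} (Υ Ψ : ℝ × EuclideanSpace ℝ (Fin q)) : ℝ :=
  Nnorm (gmul (ginv Ψ) Υ)

/-- The defining function of a totally geodesic hyperplane:
`h_{α,β,w}(Υ) = α·e^{−Υ₁} + ⟨w, Υ₂⟩ + β·e^{Υ₁}·(1 + ‖Υ₂‖²)`. -/
noncomputable def hplane {q : ℕ} (α β : ℝ) (w : EuclideanSpace ℝ (Fin q))
    (Υ : ℝ × EuclideanSpace ℝ (Fin q)) : ℝ :=
  α * Real.exp (-Υ.1) + (inner ℝ w Υ.2 : ℝ) + β * Real.exp Υ.1 * (1 + ‖Υ.2‖ ^ 2)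

/-!
Pass to the hyperboloid model. With the Minkowski form `⟪(u,v,z),(u',v',z')⟫ = ⟨z,z'⟩ - (uv' + vu')/2`
on `ℝ × ℝ × ℝ^q`, the map `φ Υ = (e^{-Υ₁}, e^{Υ₁}(1 + ‖Υ₂‖²), Υ₂)` is a bijection of `G_q` onto the
upper sheet of `{⟪X,X⟫ = -1}` with `cosh d(Υ,Ψ) = -⟪φΥ,φΨ⟫`, and `h_{α,β,w}(Υ) = ⟪φΥ,n⟫` for
`n = (-2β, -2α, w)`, where `⟪n,n⟫ = ‖w‖² - 4αβ > 0`. So `H_{α,β,w}` is the section of the hyperboloid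
by `n^⊥`. For `P` on it the form is positive definite on `P^⊥`, which contains `n` and
`X + ⟪X,P⟫P`; Cauchy–Schwarz there gives `⟪X,n⟫² ≤ (⟪X,P⟫² - 1)⟪n,n⟫`, i.e.
`cosh d(X,P) ≥ √(1 + h²/⟪n,n⟫)`, with equality at the normalised projection of `X` to `n^⊥`.
Finally `cosh 2y = 2 cosh² y - 1` turns `arcosh √(1 + x)` into `½ arcosh (1 + 2x)`.
-/

open RealInnerProductSpace

section Minkowski

variable {E : Type*} [NormedAddCommGroup E] [InnerProductSpace ℝ E]

/-- Light-cone coordinates: `(u, v, z)` has Minkowski square `‖z‖² - u v`. -/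
noncomputable def minkowski : LinearMap.BilinForm ℝ (ℝ × ℝ × E) :=
  LinearMap.mk₂ ℝ (fun X Y => ⟪X.2.2, Y.2.2⟫ - (X.1 * Y.2.1 + X.2.1 * Y.1) / 2)
    (fun X X' Y => by simp only [Prod.fst_add, Prod.snd_add, inner_add_left]; ring)
    (fun c X Y => by
      simp only [Prod.smul_fst, Prod.smul_snd, real_inner_smul_left, smul_eq_mul]; ring)
    (fun X Y Y' => by simp only [Prod.fst_add, Prod.snd_add, inner_add_right]; ring)
    (fun c X Y => by
      simp only [Prod.smul_fst, Prod.smul_snd, real_inner_smul_right, smul_eq_mul]; ring)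

theorem minkowski_apply (X Y : ℝ × ℝ × E) :
    minkowski X Y = ⟪X.2.2, Y.2.2⟫ - (X.1 * Y.2.1 + X.2.1 * Y.1) / 2 := rfl

theorem minkowski_comm (X Y : ℝ × ℝ × E) : minkowski X Y = minkowski Y X := by
  simp only [minkowski_apply, real_inner_comm]
  ring

theorem minkowski_self_nonneg_of_orthogonal {P Y : ℝ × ℝ × E} (hP : minkowski P P < 0)
    (hY : minkowski Y P = 0) : 0 ≤ minkowski Y Y := by
  obtain ⟨u, v, z₀⟩ := P
  obtain ⟨a, b, z⟩ := Y
  have hcs := real_inner_mul_inner_self_le z z₀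
  simp only [minkowski_apply, real_inner_self_eq_norm_sq] at *
  rw [show ⟪z, z₀⟫ = (a * v + b * u) / 2 by linarith] at hcs
  have huv : ‖z₀‖ ^ 2 < u * v := by linarith
  have hamgm : 4 * (a * b) * (u * v) ≤ (a * v + b * u) ^ 2 := by
    nlinarith [sq_nonneg (a * v - b * u)]
  have h : a * b * (u * v) ≤ ‖z‖ ^ 2 * (u * v) := by
    nlinarith [mul_le_mul_of_nonneg_left huv.le (sq_nonneg ‖z‖)]
  nlinarith [le_of_mul_le_mul_right h (by nlinarith [sq_nonneg ‖z₀‖])]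

theorem minkowski_sq_le_of_orthogonal {P X Y : ℝ × ℝ × E} (hP : minkowski P P < 0)
    (hX : minkowski X P = 0) (hY : minkowski Y P = 0) :
    minkowski X Y ^ 2 ≤ minkowski X X * minkowski Y Y := by
  have hquad : ∀ μ : ℝ,
      0 ≤ minkowski Y Y * (μ * μ) + 2 * minkowski X Y * μ + minkowski X X := by
    intro μ
    have h := minkowski_self_nonneg_of_orthogonal hP
      (show minkowski (X + μ • Y) P = 0 by simp [hX, hY])
    simp only [map_add, map_smul, LinearMap.add_apply, LinearMap.smul_apply, smul_eq_mul,
      minkowski_comm Y X] at h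
    linarith
  have h := discrim_le_zero hquad
  rw [discrim] at h
  linarith

theorem minkowski_neg_of_fst_pos {X Y : ℝ × ℝ × E} (hX : minkowski X X < 0)
    (hY : minkowski Y Y < 0) (hX₁ : 0 < X.1) (hY₁ : 0 < Y.1) : minkowski X Y < 0 := by
  obtain ⟨u, v, z⟩ := X
  obtain ⟨a, b, y⟩ := Y
  simp only [minkowski_apply, real_inner_self_eq_norm_sq] at *
  have hz : ‖z‖ ^ 2 < u * v := by linarith
  have hy : ‖y‖ ^ 2 < a * b := by linarith
  have hv : 0 < v := by nlinarith [sq_nonneg ‖z‖]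
  have hb : 0 < b := by nlinarith [sq_nonneg ‖y‖]
  have hlt : ‖z‖ * ‖y‖ < (u * b + v * a) / 2 := by
    refine lt_of_pow_lt_pow_left₀ 2 (by positivity) ?_
    nlinarith [sq_nonneg (u * b - v * a), mul_lt_mul'' hz hy (sq_nonneg _) (sq_nonneg _)]
  linarith [real_inner_le_norm z y]

theorem fst_pos_of_minkowski_neg {X Y : ℝ × ℝ × E} (hX : minkowski X X < 0)
    (hY : minkowski Y Y < 0) (hX₁ : 0 < X.1) (hXY : minkowski X Y < 0) : 0 < Y.1 := by
  by_contra! hY₁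
  have hY₁' : Y.1 ≠ 0 := by
    intro h
    simp only [minkowski_apply, h, real_inner_self_eq_norm_sq] at hY
    nlinarith [sq_nonneg ‖Y.2.2‖]
  have h := minkowski_neg_of_fst_pos hX (by simpa using hY) hX₁
    (show 0 < (-Y).1 from neg_pos.mpr (lt_of_le_of_ne hY₁ hY₁'))
  simp only [map_neg] at h
  linarith

theorem minkowski_sq_le_sq_sub_one_mul {X P n : ℝ × ℝ × E} (hX : minkowski X X = -1)
    (hP : minkowski P P = -1) (hPn : minkowski P n = 0) :
    minkowski X n ^ 2 ≤ (minkowski X P ^ 2 - 1) * minkowski n n := by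
  set c := minkowski X P
  -- `X + c • P` is the projection of `X` to `P^⊥`.
  have hVP : minkowski (X + c • P) P = 0 := by
    simp only [map_add, map_smul, LinearMap.add_apply, LinearMap.smul_apply, smul_eq_mul, hP]
    ring
  have hVn : minkowski (X + c • P) n = minkowski X n := by
    simp only [map_add, map_smul, LinearMap.add_apply, LinearMap.smul_apply, smul_eq_mul, hPn]
    ring
  have hVV : minkowski (X + c • P) (X + c • P) = c ^ 2 - 1 := by
    simp only [map_add, map_smul, LinearMap.add_apply, LinearMap.smul_apply, smul_eq_mul, hP, hX,
      minkowski_comm P X]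
    ring
  have h := minkowski_sq_le_of_orthogonal (by linarith) hVP (by rwa [minkowski_comm])
  rwa [hVn, hVV] at h

theorem exists_minkowski_foot {X n : ℝ × ℝ × E} (hX : minkowski X X = -1) (hX₁ : 0 < X.1)
    (hn : 0 < minkowski n n) :
    ∃ P, minkowski P P = -1 ∧ 0 < P.1 ∧ minkowski P n = 0 ∧
      -minkowski X P = √(1 + minkowski X n ^ 2 / minkowski n n) := by
  set D := minkowski n n
  set h := minkowski X n
  set K := √(1 + h ^ 2 / D)
  have hK2 : K ^ 2 = 1 + h ^ 2 / D := Real.sq_sqrt (by positivity)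
  have hK : 0 < K := Real.sqrt_pos.mpr (by positivity)
  set Y := X - (h / D) • n
  have hYn : minkowski Y n = 0 := by
    simp only [Y, map_sub, map_smul, LinearMap.sub_apply, LinearMap.smul_apply, smul_eq_mul]
    field_simp
    ring
  have hXY : minkowski X Y = -K ^ 2 := by
    simp only [Y, map_sub, map_smul, smul_eq_mul, hX, hK2]
    ring
  have hYY : minkowski Y Y = -K ^ 2 := by
    simp only [Y, map_sub, map_smul, LinearMap.sub_apply, LinearMap.smul_apply, smul_eq_mul, hX,
      minkowski_comm n X, hK2]
    field_simp
    ring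
  set P := K⁻¹ • Y
  have hPn : minkowski P n = 0 := by simp [P, hYn]
  have hXP : minkowski X P = -K := by
    simp only [P, map_smul, smul_eq_mul, hXY]
    field_simp
  have hPP : minkowski P P = -1 := by
    simp only [P, map_smul, LinearMap.smul_apply, smul_eq_mul, hYY]
    field_simp
  exact ⟨P, hPP, fst_pos_of_minkowski_neg (by linarith) (by linarith) hX₁ (by linarith), hPn,
    by linarith⟩

theorem sqrt_one_add_le_neg_minkowski {X P n : ℝ × ℝ × E} (hX : minkowski X X = -1)
    (hX₁ : 0 < X.1) (hP : minkowski P P = -1) (hP₁ : 0 < P.1) (hPn : minkowski P n = 0)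
    (hn : 0 < minkowski n n) :
    √(1 + minkowski X n ^ 2 / minkowski n n) ≤ -minkowski X P := by
  have hc : 0 < -minkowski X P :=
    neg_pos.mpr (minkowski_neg_of_fst_pos (by linarith) (by linarith) hX₁ hP₁)
  rw [Real.sqrt_le_left hc.le, ← le_sub_iff_add_le', div_le_iff₀ hn, neg_sq]
  exact minkowski_sq_le_sq_sub_one_mul hX hP hPn

end Minkowski

section Hyperboloid

open Real

variable {E : Type*} [NormedAddCommGroup E]

noncomputable def toHyperboloid (Υ : ℝ × E) : ℝ × ℝ × E :=
  (exp (-Υ.1), exp Υ.1 * (1 + ‖Υ.2‖ ^ 2), Υ.2)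

theorem minkowski_toHyperboloid_self [InnerProductSpace ℝ E] (Υ : ℝ × E) :
    minkowski (toHyperboloid Υ) (toHyperboloid Υ) = -1 := by
  simp only [minkowski_apply, toHyperboloid, real_inner_self_eq_norm_sq, exp_neg]
  field_simp
  ring

theorem toHyperboloid_fst_pos (Υ : ℝ × E) : 0 < (toHyperboloid Υ).1 := exp_pos _

theorem exists_toHyperboloid_eq [InnerProductSpace ℝ E] {P : ℝ × ℝ × E}
    (hP : minkowski P P = -1) (hP₁ : 0 < P.1) : ∃ Ψ, toHyperboloid Ψ = P := by
  obtain ⟨u, v, z⟩ := P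
  refine ⟨(-log u, z), ?_⟩
  simp only [minkowski_apply, real_inner_self_eq_norm_sq] at hP
  simp only [toHyperboloid, neg_neg, exp_log hP₁, exp_neg, Prod.mk.injEq, and_true, true_and]
  field_simp
  linarith

end Hyperboloid

section Hplane

open Real

variable {q : ℕ}

theorem arccosh_eq_arcosh : arccosh = arcosh := rfl

theorem gdist_eq_arcosh (Υ Ψ : ℝ × EuclideanSpace ℝ (Fin q)) :
    gdist Υ Ψ = arcosh (-minkowski (toHyperboloid Υ) (toHyperboloid Ψ)) := by
  rw [gdist, Nnorm, arccosh_eq_arcosh]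
  congr 1
  simp only [gmul, ginv, minkowski_apply, toHyperboloid, smul_neg, ← sub_eq_add_neg,
    norm_sub_sq_real, inner_smul_right, norm_smul, smul_smul, Real.norm_eq_abs,
    abs_of_pos (exp_pos _), mul_pow, ← exp_add]
  simp only [exp_neg, exp_sub, exp_add]
  field_simp
  ring

def hplaneNormal (α β : ℝ) (w : EuclideanSpace ℝ (Fin q)) : ℝ × ℝ × EuclideanSpace ℝ (Fin q) :=
  (-2 * β, -2 * α, w)

theorem hplane_eq_minkowski (α β : ℝ) (w : EuclideanSpace ℝ (Fin q))
    (Υ : ℝ × EuclideanSpace ℝ (Fin q)) :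
    hplane α β w Υ = minkowski (toHyperboloid Υ) (hplaneNormal α β w) := by
  simp only [hplane, minkowski_apply, toHyperboloid, hplaneNormal, real_inner_comm w]
  ring

theorem minkowski_hplaneNormal_self (α β : ℝ) (w : EuclideanSpace ℝ (Fin q)) :
    minkowski (hplaneNormal α β w) (hplaneNormal α β w) = ‖w‖ ^ 2 - 4 * α * β := by
  simp only [minkowski_apply, hplaneNormal, real_inner_self_eq_norm_sq]
  ring

theorem isLeast_gdist_image_hplane {α β : ℝ} {w : EuclideanSpace ℝ (Fin q)}
    (hw : 0 < ‖w‖ ^ 2 - 4 * α * β) (Υ : ℝ × EuclideanSpace ℝ (Fin q)) :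
    IsLeast (gdist Υ '' {Ψ | hplane α β w Ψ = 0})
      (arcosh √(1 + hplane α β w Υ ^ 2 / (‖w‖ ^ 2 - 4 * α * β))) := by
  rw [← minkowski_hplaneNormal_self] at hw ⊢
  simp only [hplane_eq_minkowski]
  constructor
  · obtain ⟨P, hP, hP₁, hPn, hXP⟩ := exists_minkowski_foot (minkowski_toHyperboloid_self Υ)
      (toHyperboloid_fst_pos Υ) hw
    obtain ⟨Ψ, rfl⟩ := exists_toHyperboloid_eq hP hP₁
    exact ⟨Ψ, hPn, by rw [gdist_eq_arcosh, hXP]⟩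
  · rintro _ ⟨Ψ, hΨ, rfl⟩
    have hle := sqrt_one_add_le_neg_minkowski (minkowski_toHyperboloid_self Υ)
      (toHyperboloid_fst_pos Υ) (minkowski_toHyperboloid_self Ψ) (toHyperboloid_fst_pos Ψ) hΨ hw
    rw [gdist_eq_arcosh]
    exact (arcosh_le_arcosh (by positivity) (lt_of_lt_of_le (by positivity) hle)).mpr hle

theorem arcosh_sqrt_one_add {x : ℝ} (hx : 0 ≤ x) : arcosh √(1 + x) = arcosh (1 + 2 * x) / 2 := by
  have h1 : 1 ≤ √(1 + x) := Real.one_le_sqrt.mpr (by linarith)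
  set y := arcosh √(1 + x)
  have hcosh : cosh (2 * y) = 1 + 2 * x := by
    rw [cosh_two_mul, sinh_sq, cosh_arcosh h1, Real.sq_sqrt (by linarith)]
    ring
  rw [← hcosh, arcosh_cosh (by positivity [arcosh_nonneg h1])]
  ring

end Hplane

theorem stmt_19_general (q : ℕ) (α β : ℝ) (w : EuclideanSpace ℝ (Fin q))
    (hw : ‖w‖ ^ 2 - 4 * α * β > 0) :
    {Υ : ℝ × EuclideanSpace ℝ (Fin q) | hplane α β w Υ = 0}.Nonempty ∧
    ∀ Υ : ℝ × EuclideanSpace ℝ (Fin q),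
      sInf (gdist Υ '' {Ψ : ℝ × EuclideanSpace ℝ (Fin q) | hplane α β w Ψ = 0})
        = (1 / 2) * arccosh (1 + 2 * hplane α β w Υ ^ 2 / (‖w‖ ^ 2 - 4 * α * β)) := by
  refine ⟨(isLeast_gdist_image_hplane hw 0).nonempty.of_image, fun Υ => ?_⟩
  rw [(isLeast_gdist_image_hplane hw Υ).csInf_eq, arcosh_sqrt_one_add (by positivity),
    arccosh_eq_arcosh, mul_div_assoc]
  ring

/-- If `‖w‖² − 4αβ > 0`, the hyperplane `H_{α,β,w} = {Υ : h_{α,β,w}(Υ) = 0}` is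
nonempty, and the infimum of `d(Υ, Ψ)` over `Ψ ∈ H_{α,β,w}` equals
`(1/2)·arccosh(1 + 2·h_{α,β,w}(Υ)²/(‖w‖² − 4αβ))`. -/
theorem stmt_19 (q : ℕ) (hq : 1 ≤ q) (α β : ℝ) (w : EuclideanSpace ℝ (Fin q))
    (hw : ‖w‖ ^ 2 - 4 * α * β > 0) :
    {Υ : ℝ × EuclideanSpace ℝ (Fin q) | hplane α β w Υ = 0}.Nonempty ∧
    ∀ Υ : ℝ × EuclideanSpace ℝ (Fin q),
      sInf (gdist Υ '' {Ψ : ℝ × EuclideanSpace ℝ (Fin q) | hplane α β w Ψ = 0})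
        = (1 / 2) * arccosh (1 + 2 * hplane α β w Υ ^ 2 / (‖w‖ ^ 2 - 4 * α * β)) :=
  stmt_19_general q α β w hw
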